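/- arXiv:1704.01671 — 3 statements merged into one kernel-verified Lean document; each statement's English description precedes it below -/
import Mathlib

section
/- There exists a matrix P ∈ GL(6, ℤ) (an integer matrix with determinant ±1) such that Pᵀ M' P equals the block-diagonal matrix U ⊕ A1(-1) ⊕ A3(-1); that is, the lattice (ℤ⁶, M') is isometric to U ⊕ A1 ⊕ A3. In particular det M' = -8. -/
open Matrix

def M' : Matrix (Fin 6) (Fin 6) ℤ :=
  !![-2, 1, 0, 1, 0, 0;
    1, -2, 0, 0, 1, 1;
    0, 0, -2, 0, 0, 1;
    1, 0, 0, -2, 1, 0;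
    0, 1, 0, 1, -2, 0;
    0, 1, 1, 0, 0, -2]

def B : Matrix (Fin 6) (Fin 6) ℤ :=
  !![0, 1, 0, 0, 0, 0;
    1, 0, 0, 0, 0, 0;
    0, 0, -2, 0, 0, 0;
    0, 0, 0, -2, 1, 0;
    0, 0, 0, 1, -2, 1;
    0, 0, 0, 0, 1, -2]

def Pmat : Matrix (Fin 6) (Fin 6) ℤ :=
  !![-3, -1, -3, -1, 0, 0;
    -3, -1, -3, 0, 0, 0;
    -2, -1, -3, 0, 0, 0;
    -3, -1, -3, -1, 0, 1;
    -3, -1, -3, -1, 1, 0;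
    -1, -1, -2, 0, 0, 0]

set_option maxRecDepth 40000 in
set_option maxHeartbeats 4000000 in
lemma Pmat_det : Pmat.det = -1 := by
  simp (config := { maxSteps := 1000000 }) [Pmat, Matrix.det_succ_row_zero, Fin.sum_univ_succ]
  decide

set_option maxRecDepth 40000 in
set_option maxHeartbeats 4000000 in
lemma M'_det : M'.det = -8 := by
  simp (config := { maxSteps := 1000000 }) [M', Matrix.det_succ_row_zero, Fin.sum_univ_succ]
  decide

lemma Pmat_conj : Pmatᵀ * M' * Pmat = B := by decide

theorem stmt_0 :
    (∃ P : Matrix (Fin 6) (Fin 6) ℤ,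
      (P.det = 1 ∨ P.det = -1) ∧ Pᵀ * M' * P = B) ∧ Matrix.det M' = -8 := by
  exact ⟨⟨Pmat, Or.inr Pmat_det, Pmat_conj⟩, M'_det⟩
end

section
/- There exists a primitive embedding of the lattice (ℤ¹⁴, M) into the K3 lattice: an injective ℤ-linear map ι : ℤ¹⁴ → ℤ²² with (ι x)ᵀ G (ι y) = xᵀ M y for all x, y ∈ ℤ¹⁴, such that ℤ²² / ι(ℤ¹⁴) is torsion-free. -/
/-!
The columns of an explicit 22 × 14 integer matrix `A` span a copy of `(ℤ¹⁴, M)` inside the K3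
lattice: `Aᵀ G A = M`. An integer left inverse `B` (`B A = 1`) makes `x ↦ A x` a split injection,
so its image is a direct summand of `ℤ²²` and the quotient is torsion-free.
-/

open Matrix

def M : Matrix (Fin 14) (Fin 14) ℤ :=
  !![-2, 0, 0, 0, 0, 0, 1, 0, 0, 0, 0, 0, 0, 0;
    0, -2, 0, 0, 0, 0, 1, 1, 0, 1, 0, 0, 0, 0;
    0, 0, -2, 1, 0, 0, 0, 0, 1, 0, 0, 0, 0, 1;
    0, 0, 1, -2, 1, 1, 0, 0, 0, 0, 0, 0, 0, 0;
    0, 0, 0, 1, -2, 0, 0, 0, 0, 0, 0, 0, 0, 0;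
    0, 0, 0, 1, 0, -2, 0, 0, 0, 0, 0, 0, 0, 0;
    1, 1, 0, 0, 0, 0, -2, 0, 0, 0, 0, 0, 0, 0;
    0, 1, 0, 0, 0, 0, 0, -2, 0, 0, 0, 0, 0, 0;
    0, 0, 1, 0, 0, 0, 0, 0, -2, 0, 0, 0, 0, 0;
    0, 1, 0, 0, 0, 0, 0, 0, 0, -2, 1, 0, 0, 0;
    0, 0, 0, 0, 0, 0, 0, 0, 0, 1, -2, 1, 0, 0;
    0, 0, 0, 0, 0, 0, 0, 0, 0, 0, 1, -2, 1, 0;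
    0, 0, 0, 0, 0, 0, 0, 0, 0, 0, 0, 1, -2, 1;
    0, 0, 1, 0, 0, 0, 0, 0, 0, 0, 0, 0, 1, -2]

def GK3 : Matrix (Fin 22) (Fin 22) ℤ :=
  !![0, 1, 0, 0, 0, 0, 0, 0, 0, 0, 0, 0, 0, 0, 0, 0, 0, 0, 0, 0, 0, 0;
    1, 0, 0, 0, 0, 0, 0, 0, 0, 0, 0, 0, 0, 0, 0, 0, 0, 0, 0, 0, 0, 0;
    0, 0, 0, 1, 0, 0, 0, 0, 0, 0, 0, 0, 0, 0, 0, 0, 0, 0, 0, 0, 0, 0;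
    0, 0, 1, 0, 0, 0, 0, 0, 0, 0, 0, 0, 0, 0, 0, 0, 0, 0, 0, 0, 0, 0;
    0, 0, 0, 0, 0, 1, 0, 0, 0, 0, 0, 0, 0, 0, 0, 0, 0, 0, 0, 0, 0, 0;
    0, 0, 0, 0, 1, 0, 0, 0, 0, 0, 0, 0, 0, 0, 0, 0, 0, 0, 0, 0, 0, 0;
    0, 0, 0, 0, 0, 0, -2, 0, 1, 0, 0, 0, 0, 0, 0, 0, 0, 0, 0, 0, 0, 0;
    0, 0, 0, 0, 0, 0, 0, -2, 0, 1, 0, 0, 0, 0, 0, 0, 0, 0, 0, 0, 0, 0;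
    0, 0, 0, 0, 0, 0, 1, 0, -2, 1, 0, 0, 0, 0, 0, 0, 0, 0, 0, 0, 0, 0;
    0, 0, 0, 0, 0, 0, 0, 1, 1, -2, 1, 0, 0, 0, 0, 0, 0, 0, 0, 0, 0, 0;
    0, 0, 0, 0, 0, 0, 0, 0, 0, 1, -2, 1, 0, 0, 0, 0, 0, 0, 0, 0, 0, 0;
    0, 0, 0, 0, 0, 0, 0, 0, 0, 0, 1, -2, 1, 0, 0, 0, 0, 0, 0, 0, 0, 0;
    0, 0, 0, 0, 0, 0, 0, 0, 0, 0, 0, 1, -2, 1, 0, 0, 0, 0, 0, 0, 0, 0;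
    0, 0, 0, 0, 0, 0, 0, 0, 0, 0, 0, 0, 1, -2, 0, 0, 0, 0, 0, 0, 0, 0;
    0, 0, 0, 0, 0, 0, 0, 0, 0, 0, 0, 0, 0, 0, -2, 0, 1, 0, 0, 0, 0, 0;
    0, 0, 0, 0, 0, 0, 0, 0, 0, 0, 0, 0, 0, 0, 0, -2, 0, 1, 0, 0, 0, 0;
    0, 0, 0, 0, 0, 0, 0, 0, 0, 0, 0, 0, 0, 0, 1, 0, -2, 1, 0, 0, 0, 0;
    0, 0, 0, 0, 0, 0, 0, 0, 0, 0, 0, 0, 0, 0, 0, 1, 1, -2, 1, 0, 0, 0;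
    0, 0, 0, 0, 0, 0, 0, 0, 0, 0, 0, 0, 0, 0, 0, 0, 0, 1, -2, 1, 0, 0;
    0, 0, 0, 0, 0, 0, 0, 0, 0, 0, 0, 0, 0, 0, 0, 0, 0, 0, 1, -2, 1, 0;
    0, 0, 0, 0, 0, 0, 0, 0, 0, 0, 0, 0, 0, 0, 0, 0, 0, 0, 0, 1, -2, 1;
    0, 0, 0, 0, 0, 0, 0, 0, 0, 0, 0, 0, 0, 0, 0, 0, 0, 0, 0, 0, 1, -2]

theorem LinearMap.mem_range_of_smul_mem_range_of_comp_eq_id {R N P : Type*} [Ring R] [IsDomain R]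
    [AddCommGroup N] [Module R N] [AddCommGroup P] [Module R P] [Module.IsTorsionFree R P]
    {f : N →ₗ[R] P} {g : P →ₗ[R] N} (hgf : g ∘ₗ f = LinearMap.id) {v : P} {k : R} (hk : k ≠ 0)
    (hv : k • v ∈ LinearMap.range f) : v ∈ LinearMap.range f := by
  obtain ⟨x, hx⟩ := hv
  refine ⟨g v, smul_right_injective P hk ?_⟩
  calc k • f (g v) = f (g (f x)) := by rw [hx, map_smul, map_smul]
    _ = k • v := by rw [← LinearMap.comp_apply g f, hgf, LinearMap.id_apply, hx]

theorem Matrix.mulVec_dotProduct_mulVec_mulVec {m n R : Type*} [Fintype m] [Fintype n]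
    [CommSemiring R] (A : Matrix m n R) (G : Matrix m m R) (x y : n → R) :
    A *ᵥ x ⬝ᵥ (G *ᵥ (A *ᵥ y)) = x ⬝ᵥ ((Aᵀ * G * A) *ᵥ y) := by
  rw [dotProduct_mulVec x, dotProduct_mulVec, dotProduct_mulVec, ← vecMul_vecMul, ← vecMul_vecMul,
    vecMul_transpose]

def k3EmbeddingMatrix : Matrix (Fin 22) (Fin 14) ℤ :=
  !![1, 0, 0, 0, 0, 0, 0, 0, 0, 0, 0, 0, 0, 0;
    0, 0, 0, 0, 0, 0, 0, 0, 0, 0, 0, 0, 0, 0;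
    0, 1, 0, 0, 0, 0, 0, 0, 0, 0, 0, 0, 0, 0;
    4, 10, 0, 0, 0, 0, 0, 0, 0, 0, 0, 0, 0, 0;
    0, 0, 1, 0, 0, 0, 0, 0, 0, 0, 0, 0, 0, 0;
    4, 26, 17, 0, 0, 0, 0, 0, 0, 0, 0, 0, 0, 0;
    0, -6, -9, 0, 1, 0, 0, 0, 0, 0, 0, 0, 0, 0;
    0, -9, -13, 0, 0, 0, 0, 0, 0, 0, 0, 0, 0, 0;
    0, -12, -18, 1, 0, 0, 0, 0, 0, 0, 0, 0, 0, 0;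
    0, -18, -26, 0, 0, 1, 0, 0, 0, 0, 0, 0, 0, 0;
    0, -15, -21, 0, 0, 0, 0, 0, 0, 0, 0, 0, 0, 0;
    0, -12, -16, 0, 0, 0, 0, 1, 0, 0, 0, 0, 0, 0;
    0, -8, -11, 0, 0, 0, 0, 0, 0, 0, 0, 0, 0, 0;
    0, -4, -6, 0, 0, 0, 0, 0, 1, 0, 0, 0, 0, 0;
    -2, -6, -6, 0, 0, 0, 0, 0, 0, 1, 0, 0, 0, 0;
    -3, -8, -9, 0, 0, 0, 0, 0, 0, 0, 0, 0, 0, 0;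
    -4, -11, -12, 0, 0, 0, 0, 0, 0, 0, 1, 0, 0, 0;
    -6, -16, -18, 0, 0, 0, 0, 0, 0, 0, 0, 1, 0, 0;
    -5, -13, -15, 0, 0, 0, 0, 0, 0, 0, 0, 0, 1, 0;
    -4, -10, -12, 0, 0, 0, 0, 0, 0, 0, 0, 0, 0, 1;
    -3, -7, -8, 0, 0, 0, 0, 0, 0, 0, 0, 0, 0, 0;
    -2, -4, -4, 0, 0, 0, 1, 0, 0, 0, 0, 0, 0, 0]

def k3EmbeddingRetraction : Matrix (Fin 14) (Fin 22) ℤ :=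
  !![1, 0, 0, 0, 0, 0, 0, 0, 0, 0, 0, 0, 0, 0, 0, 0, 0, 0, 0, 0, 0, 0;
    0, 0, 1, 0, 0, 0, 0, 0, 0, 0, 0, 0, 0, 0, 0, 0, 0, 0, 0, 0, 0, 0;
    0, 0, 0, 0, 1, 0, 0, 0, 0, 0, 0, 0, 0, 0, 0, 0, 0, 0, 0, 0, 0, 0;
    0, 0, 12, 0, 18, 0, 0, 0, 1, 0, 0, 0, 0, 0, 0, 0, 0, 0, 0, 0, 0, 0;
    0, 0, 6, 0, 9, 0, 1, 0, 0, 0, 0, 0, 0, 0, 0, 0, 0, 0, 0, 0, 0, 0;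
    0, 0, 18, 0, 26, 0, 0, 0, 0, 1, 0, 0, 0, 0, 0, 0, 0, 0, 0, 0, 0, 0;
    2, 0, 4, 0, 4, 0, 0, 0, 0, 0, 0, 0, 0, 0, 0, 0, 0, 0, 0, 0, 0, 1;
    0, 0, 12, 0, 16, 0, 0, 0, 0, 0, 0, 1, 0, 0, 0, 0, 0, 0, 0, 0, 0, 0;
    0, 0, 4, 0, 6, 0, 0, 0, 0, 0, 0, 0, 0, 1, 0, 0, 0, 0, 0, 0, 0, 0;
    2, 0, 6, 0, 6, 0, 0, 0, 0, 0, 0, 0, 0, 0, 1, 0, 0, 0, 0, 0, 0, 0;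
    4, 0, 11, 0, 12, 0, 0, 0, 0, 0, 0, 0, 0, 0, 0, 0, 1, 0, 0, 0, 0, 0;
    6, 0, 16, 0, 18, 0, 0, 0, 0, 0, 0, 0, 0, 0, 0, 0, 0, 1, 0, 0, 0, 0;
    5, 0, 13, 0, 15, 0, 0, 0, 0, 0, 0, 0, 0, 0, 0, 0, 0, 0, 1, 0, 0, 0;
    4, 0, 10, 0, 12, 0, 0, 0, 0, 0, 0, 0, 0, 0, 0, 0, 0, 0, 0, 1, 0, 0]

set_option maxRecDepth 10000 in
theorem k3EmbeddingMatrix_gram : k3EmbeddingMatrixᵀ * GK3 * k3EmbeddingMatrix = M := by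
  decide

set_option maxRecDepth 10000 in
theorem k3EmbeddingRetraction_mul_embedding : k3EmbeddingRetraction * k3EmbeddingMatrix = 1 := by
  decide

theorem k3EmbeddingRetraction_comp_embedding :
    mulVecLin k3EmbeddingRetraction ∘ₗ mulVecLin k3EmbeddingMatrix = LinearMap.id := by
  rw [← mulVecLin_mul, k3EmbeddingRetraction_mul_embedding, mulVecLin_one]

theorem stmt_2 :
    ∃ ι : (Fin 14 → ℤ) →ₗ[ℤ] (Fin 22 → ℤ),
      Function.Injective ι ∧
      (∀ x y : Fin 14 → ℤ, ι x ⬝ᵥ (GK3 *ᵥ ι y) = x ⬝ᵥ (M *ᵥ y)) ∧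
      (∀ (v : Fin 22 → ℤ) (k : ℤ), k ≠ 0 → k • v ∈ LinearMap.range ι → v ∈ LinearMap.range ι) := by
  refine ⟨mulVecLin k3EmbeddingMatrix, ?_, ?_, ?_⟩
  · exact LinearMap.injective_of_comp_eq_id _ _ k3EmbeddingRetraction_comp_embedding
  · intro x y
    rw [mulVecLin_apply, mulVecLin_apply, mulVec_dotProduct_mulVec_mulVec,
      k3EmbeddingMatrix_gram]
  · intro v k hk hv
    exact LinearMap.mem_range_of_smul_mem_range_of_comp_eq_id
      k3EmbeddingRetraction_comp_embedding hk hv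
end

section
/- There exists a primitive embedding ι : ℤ¹⁴ → ℤ²² of (ℤ¹⁴, M) into the K3 lattice together with an injective ℤ-linear map j : ℤ⁸ → ℤ²² whose image equals the orthogonal complement {v ∈ ℤ²² | vᵀ G (ι x) = 0 for all x ∈ ℤ¹⁴} and which satisfies (j a)ᵀ G (j b) = aᵀ (U ⊕ M') b for all a, b ∈ ℤ⁸, where U ⊕ M' is the 8×8 block-diagonal matrix built from U and M'. (Lattice duality for the transpose-dual pair (Z_{1,0}, Z_{1,0}): the orthogonal complement of Pic_Δ in the K3 lattice is isometric to U ⊕ Pic_{Δ'}.) -/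
open Matrix

def UM' : Matrix (Fin 8) (Fin 8) ℤ :=
  !![0, 1, 0, 0, 0, 0, 0, 0;
    1, 0, 0, 0, 0, 0, 0, 0;
    0, 0, -2, 1, 0, 1, 0, 0;
    0, 0, 1, -2, 0, 0, 1, 1;
    0, 0, 0, 0, -2, 0, 0, 1;
    0, 0, 1, 0, 0, -2, 1, 0;
    0, 0, 0, 1, 0, 1, -2, 0;
    0, 0, 0, 1, 1, 0, 0, -2]

def Am : Matrix (Fin 22) (Fin 14) ℤ :=
  !![0, 0, 0, 0, 0, 0, 0, 0, 0, 0, 0, 0, 0, 0;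
    0, 0, 0, 0, 0, 0, 0, 0, 0, 0, 0, 0, 0, 0;
    -1, 0, 0, 0, 0, 0, 1, 0, 2, 0, 0, 0, 0, 0;
    1, 0, 0, 0, 0, 0, 0, 0, 2, 0, 0, 0, 0, 0;
    0, -1, -1, -3, 1, 5, -1, 3, 1, -2, 5, -4, 1, 1;
    0, -1, -1, -3, 1, 5, -1, 3, 1, -2, 5, -4, 1, 1;
    0, 1, 1, 3, -2, -4, 1, -3, -1, 1, -4, 4, -1, -1;
    0, 2, 3, 5, -3, -9, 2, -6, -2, 3, -9, 8, -2, -2;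
    0, 3, 3, 7, -4, -11, 2, -7, -3, 3, -11, 10, -3, -2;
    0, 4, 5, 9, -6, -15, 3, -10, -5, 4, -15, 14, -4, -3;
    0, 4, 4, 8, -5, -13, 3, -9, -3, 3, -13, 12, -3, -3;
    0, 3, 3, 7, -4, -11, 3, -8, -3, 3, -11, 10, -3, -2;
    0, 2, 2, 4, -3, -6, 2, -5, -1, 2, -7, 6, -2, -1;
    0, 1, 1, 3, -2, -4, 1, -3, -1, 2, -5, 4, -1, -1;
    0, 2, 2, 4, -1, -7, 1, -5, -3, 3, -8, 6, -1, -2;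
    0, 3, 3, 7, -2, -12, 2, -8, -3, 5, -12, 9, -2, -3;
    0, 4, 4, 10, -3, -17, 3, -11, -5, 7, -18, 14, -3, -4;
    0, 6, 6, 14, -4, -24, 4, -16, -7, 10, -25, 19, -4, -6;
    0, 5, 5, 12, -4, -20, 3, -13, -6, 8, -20, 15, -3, -5;
    0, 4, 4, 9, -3, -15, 2, -10, -4, 6, -15, 12, -3, -4;
    0, 2, 3, 6, -2, -10, 2, -6, -2, 4, -10, 8, -2, -3;
    0, 1, 2, 3, -1, -5, 1, -3, -2, 2, -5, 4, -1, -2]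
def Bm : Matrix (Fin 22) (Fin 8) ℤ :=
  !![1, 0, 0, 0, 0, 0, 0, 0;
    0, 1, 0, 0, 0, 0, 0, 0;
    0, 0, 0, 0, 0, 0, 0, 0;
    0, 0, 0, 0, 0, 0, 0, 0;
    0, 0, 0, 7, 3, 1, -6, 12;
    0, 0, 1, 7, 3, -1, -5, 12;
    0, 0, 0, -8, -4, 0, 6, -11;
    0, 0, 0, -16, -7, 0, 12, -24;
    0, 0, 0, -20, -9, 0, 15, -29;
    0, 0, 0, -28, -12, 0, 21, -40;
    0, 0, 0, -24, -10, 0, 18, -35;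
    0, 0, 0, -20, -8, 0, 15, -30;
    0, 0, 0, -12, -5, 0, 9, -18;
    0, 0, 0, -8, -3, 0, 6, -12;
    0, 0, -1, -9, -4, 0, 7, -15;
    0, 0, -2, -15, -7, 0, 12, -24;
    0, 0, -3, -21, -10, 0, 17, -36;
    0, 0, -5, -30, -14, 0, 25, -51;
    0, 0, -4, -24, -11, 0, 20, -42;
    0, 0, -3, -18, -8, 0, 15, -32;
    0, 0, -2, -12, -5, 0, 10, -21;
    0, 0, -1, -6, -3, 0, 5, -11]
def Pm : Matrix (Fin 14) (Fin 22) ℤ :=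
  !![0, 0, 0, 1, -2, 0, 0, -2, -2, 2, 0, 0, 0, 0, 0, 0, 0, 0, 0, 0, 0, 0;
    0, 0, 2, 2, -6, 0, 1, -8, -6, 8, 0, -2, 0, 0, 0, 3, 0, 0, -1, 0, -1, 0;
    0, 0, 2, 2, 2, 0, 0, -2, -1, 3, -2, 1, -1, 0, 1, -1, 0, 0, 1, 0, 0, 0;
    0, 0, 2, 2, 1, 0, 1, -3, -1, 3, -2, 1, -1, 0, 1, -1, 0, 0, 1, 0, 0, 0;
    0, 0, 1, 1, 1, 0, 0, -1, 0, 1, -1, 1, -1, 0, 1, 0, 0, 0, 0, 0, 0, 0;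
    0, 0, 1, 1, 0, 0, 1, -2, -1, 2, -1, 0, 0, 0, 1, 0, 0, 0, 0, 0, 0, 0;
    0, 0, 1, 1, -4, 0, 0, -4, -4, 4, 0, 0, 0, 0, 0, 0, 0, 0, 0, 0, 0, 0;
    0, 0, 1, 1, -4, 0, 0, -4, -3, 4, 0, -1, 0, 0, 0, 0, 0, 0, 0, 0, 0, 0;
    0, 0, 0, 0, 1, 0, 0, 1, 1, -1, 0, 0, 0, 0, 0, 0, 0, 0, 0, 0, 0, 0;
    0, 0, 2, 2, -6, 0, 2, -7, -6, 8, -1, -2, 0, 0, 0, 3, 0, 0, -1, 0, -1, 0;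
    0, 0, 2, 2, -4, 0, 2, -6, -5, 7, -1, -1, -1, 0, 0, 3, 0, 0, -1, 0, -1, 0;
    0, 0, 2, 2, -4, 0, 2, -5, -4, 6, -1, -1, -1, 0, 1, 2, 0, 0, -1, 0, -1, 0;
    0, 0, 2, 2, -2, 0, 1, -3, -3, 4, -1, 0, -1, 0, 1, -1, 0, 0, 1, 0, -1, 0;
    0, 0, 2, 2, 0, 0, 0, -2, -1, 3, -2, 1, -1, 0, 1, -1, 0, 0, 1, 0, -1, 0]
def Qm : Matrix (Fin 8) (Fin 22) ℤ :=
  !![1, 0, 0, 0, 0, 0, 0, 0, 0, 0, 0, 0, 0, 0, 0, 0, 0, 0, 0, 0, 0, 0;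
    0, 1, 0, 0, 0, 0, 0, 0, 0, 0, 0, 0, 0, 0, 0, 0, 0, 0, 0, 0, 0, 0;
    0, 0, 0, 0, -1, -1, 0, 0, 0, 0, 0, -1, 2, 0, -2, 0, 0, 0, 0, 0, 0, 0;
    0, 0, 0, 0, -3, -3, 0, 0, 3, 0, 0, 4, -13, 0, -3, 0, 0, 0, 0, 0, 0, 0;
    0, 0, 0, 0, 0, 0, 0, 0, 0, 0, 0, 3, -5, 0, 0, 0, 0, 0, 0, 0, 0, 0;
    0, 0, 0, 0, -2, -3, 0, 0, 3, 0, 0, 5, -14, 0, -3, 0, 0, 0, 0, 0, 0, 0;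
    0, 0, 0, 0, -4, -4, 0, 0, 6, 0, 0, 11, -30, 0, -4, 0, 0, 0, 0, 0, 0, 0;
    0, 0, 0, 0, 0, 0, 0, 0, 1, 0, 0, 2, -5, 0, 0, 0, 0, 0, 0, 0, 0, 0]
def Rm : Matrix (Fin 22) (Fin 14) ℤ :=
  !![0, 0, 0, 0, 0, 0, 0, 0, 0, 0, 0, 0, 0, 0;
    0, 0, 0, 0, 0, 0, 0, 0, 0, 0, 0, 0, 0, 0;
    224631, 449262, 449262, 449262, 224631, 224631, 224631, 224631, 0, 449262, 449262, 449262, 449262, 449262;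
    0, 449262, 449262, 449262, 224631, 224631, 224631, 224631, 0, 449262, 449262, 449262, 449262, 449262;
    43888, 132722, -95770, -72746, -3808, -50665, 87776, 88339, -21944, 125132, 76390, 25696, 5292, -29388;
    43888, 132722, -95770, -72746, -3808, -50665, 87776, 88339, -21944, 125132, 76390, 25696, 5292, -29388;
    83296, 302915, 1757, -76565, 7022, -60535, 166592, 181009, -41648, 235034, 154318, 107404, 86040, 69765;
    49580, 153907, 35899, 126686, 28537, 81019, 99160, 83438, -24790, 58240, 65210, 66044, 31365, 58602;
    78920, 168235, -61742, -129175, -77357, -42749, 157840, 54071, -39460, 151966, 145391, 112376, 82728, -4038;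
    -4028, -80029, -197047, -122345, -44200, -50566, -8056, -73724, 2014, -119992, -156260, -183095, -163206, -180660;
    -33368, -94357, 125225, 133516, 61694, 73202, -66736, -44357, 16684, 10913, -11810, -4796, 10062, 106611;
    -62708, -108685, -1765, -59885, -57043, -27661, -125416, -14990, 31354, -82813, -91991, -51128, -41301, -55380;
    -4376, 89951, 161132, 172021, 140252, 17786, -8752, 97693, 2188, 141563, 215704, 229603, 221319, 150828;
    -58332, -198636, 61734, -7275, 27336, -45447, -116664, -112683, 29166, -224376, -83064, -56100, -37989, 18423;
    78676, 166064, -259867, -255854, -141676, -147160, 157352, 94219, -39338, 121052, 57628, -50105, -135654, -174402;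
    -24616, -49628, 177346, 163859, 80698, 112507, -49232, -15112, 12308, -47582, 6044, 135014, 166440, 179340;
    -54060, -116436, 82521, 91995, 60978, 34653, -108120, -79107, 27030, -73470, -63672, -84909, -30786, -4938;
    -85746, -208716, 86403, 75651, -20076, 2118, -171492, -90894, 42873, -166146, -76260, -62733, -44775, -2979;
    17546, 6976, -126179, -119431, -17819, -32918, 35092, 18437, -8773, 2488, -24676, -23221, -122238, -132090;
    96222, 173040, -86538, -75777, -9741, -30324, 192444, 112656, -48111, 123540, 32952, 1551, 41616, -6984;
    150282, 514107, -19305, -18018, 4158, 9900, 300564, 191763, -75141, 421641, 321255, 236214, 222156, 147708;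
    -54060, -116436, -67233, -57759, -13899, -40224, -108120, -79107, 27030, -73470, -63672, -10032, 44091, 69939]
def Qpm : Matrix (Fin 8) (Fin 22) ℤ :=
  !![224631, 0, 0, 0, 0, 0, 0, 0, 0, 0, 0, 0, 0, 0, 0, 0, 0, 0, 0, 0, 0, 0;
    0, 224631, 0, 0, 0, 0, 0, 0, 0, 0, 0, 0, 0, 0, 0, 0, 0, 0, 0, 0, 0, 0;
    0, 0, 0, 0, -53916, -53916, 48927, 77244, 72483, -16098, -11337, -6576, 23556, -30132, -170820, -208203, -70239, 26271, 63654, 42588, -36927, 79515;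
    0, 0, 0, 0, -53589, -53589, 81240, 82875, 94404, -20325, -31854, -43383, 13164, -56547, -271992, -282813, -119088, 99018, 109839, 62478, -43065, 105543;
    0, 0, 0, 0, 15743, 15743, -74452, -49019, -71231, 14258, 36470, 58682, 3221, 55461, 26891, 30028, -56919, -4542, -7679, 19212, 76131, -56919;
    0, 0, 0, 0, 81911, -142720, 63086, 55867, 73795, 12116, -5812, -23740, 10709, -34449, -265429, -251861, -156603, 106455, 92887, 52089, -15939, 68028;
    0, 0, 0, 0, -6893, -6893, 77245, 34490, 75107, 40330, -287, -40904, -2138, -38766, -360038, -295519, -242967, 186639, 122120, 61590, 5049, 56541;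
    0, 0, 0, 0, 28750, 28750, 5266, -25624, -6445, 28849, 9670, -9509, -11711, 2202, -6482, 33092, -26610, 29346, -10228, -16710, 9900, -26610]
set_option maxRecDepth 1000000

set_option maxHeartbeats 1000000 in
lemma hPA : Pm * Am = 1 := by decide
set_option maxHeartbeats 1000000 in
lemma hQB : Qm * Bm = 1 := by decide
set_option maxHeartbeats 2000000 in
lemma hMA : Amᵀ * GK3 * Am = M := by decide
set_option maxHeartbeats 2000000 in
lemma hUB : Bmᵀ * GK3 * Bm = UM' := by decide
set_option maxHeartbeats 2000000 in
lemma hBA : Bmᵀ * GK3 * Am = 0 := by decide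
set_option maxHeartbeats 4000000 in
lemma hproj : Bm * Qpm + Rm * (Amᵀ * GK3) = (224631 : ℤ) • 1 := by decide
set_option maxHeartbeats 1000000 in
lemma hGt : GK3ᵀ = GK3 := by decide

lemma smul_cancel {k : ℤ} (hk : k ≠ 0) {v w : Fin 22 → ℤ} (h : k • v = k • w) : v = w := by
  funext i
  have h2 := congrFun h i
  simp only [Pi.smul_apply, smul_eq_mul] at h2
  exact mul_left_cancel₀ hk h2

lemma pair {n m : ℕ} (X : Matrix (Fin 22) (Fin n) ℤ) (Y : Matrix (Fin 22) (Fin m) ℤ)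
    (x : Fin n → ℤ) (y : Fin m → ℤ) :
    (X *ᵥ x) ⬝ᵥ (GK3 *ᵥ (Y *ᵥ y)) = x ⬝ᵥ ((Xᵀ * GK3 * Y) *ᵥ y) := by
  rw [Matrix.dotProduct_mulVec, ← Matrix.vecMul_transpose, Matrix.vecMul_vecMul,
    Matrix.dotProduct_mulVec, Matrix.vecMul_vecMul, ← Matrix.dotProduct_mulVec]

theorem stmt_4 :
    ∃ ι : (Fin 14 → ℤ) →ₗ[ℤ] (Fin 22 → ℤ),
      Function.Injective ι ∧
      (∀ x y : Fin 14 → ℤ, ι x ⬝ᵥ (GK3 *ᵥ ι y) = x ⬝ᵥ (M *ᵥ y)) ∧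
      (∀ (v : Fin 22 → ℤ) (k : ℤ), k ≠ 0 → k • v ∈ LinearMap.range ι → v ∈ LinearMap.range ι) ∧
      ∃ j : (Fin 8 → ℤ) →ₗ[ℤ] (Fin 22 → ℤ),
        Function.Injective j ∧
        (∀ v : Fin 22 → ℤ, v ∈ LinearMap.range j ↔ ∀ x : Fin 14 → ℤ, v ⬝ᵥ (GK3 *ᵥ ι x) = 0) ∧
        (∀ a b : Fin 8 → ℤ, j a ⬝ᵥ (GK3 *ᵥ j b) = a ⬝ᵥ (UM' *ᵥ b)) := by
  refine ⟨Matrix.mulVecLin Am, ?_, ?_, ?_, Matrix.mulVecLin Bm, ?_, ?_, ?_⟩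
  · intro x y h
    have h2 : Pm *ᵥ (Am *ᵥ x) = Pm *ᵥ (Am *ᵥ y) := by
      simpa [Matrix.mulVecLin_apply] using congrArg (Pm *ᵥ ·) h
    simpa [Matrix.mulVec_mulVec, hPA, Matrix.one_mulVec] using h2
  · intro x y
    simp only [Matrix.mulVecLin_apply]
    rw [pair, hMA]
  · rintro v k hk ⟨x, hx⟩
    refine ⟨Pm *ᵥ v, ?_⟩
    simp only [Matrix.mulVecLin_apply] at hx ⊢
    have h1 : k • (Am *ᵥ (Pm *ᵥ v)) = k • v := by
      rw [← Matrix.mulVec_smul, ← Matrix.mulVec_smul, ← hx, Matrix.mulVec_mulVec,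
        Matrix.mulVec_mulVec]
      rw [Matrix.mul_assoc, hPA, Matrix.mul_one]
    exact smul_cancel hk h1
  · intro a b h
    have h2 : Qm *ᵥ (Bm *ᵥ a) = Qm *ᵥ (Bm *ᵥ b) := by
      simpa [Matrix.mulVecLin_apply] using congrArg (Qm *ᵥ ·) h
    simpa [Matrix.mulVec_mulVec, hQB, Matrix.one_mulVec] using h2
  · intro v
    constructor
    · rintro ⟨a, rfl⟩ x
      simp only [Matrix.mulVecLin_apply]
      rw [pair, hBA]
      simp
    · intro h
      have hC : (Amᵀ * GK3) *ᵥ v = 0 := by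
        have hw : v ᵥ* (GK3 * Am) = 0 := by
          funext i
          have := h (Pi.single i 1)
          rw [Matrix.mulVecLin_apply, Matrix.mulVec_mulVec, Matrix.dotProduct_mulVec] at this
          simpa using this
        calc (Amᵀ * GK3) *ᵥ v = (GK3 * Am)ᵀ *ᵥ v := by rw [Matrix.transpose_mul, hGt]
          _ = v ᵥ* (GK3 * Am) := by rw [Matrix.mulVec_transpose]
          _ = 0 := hw
      have key : Bm *ᵥ (Qpm *ᵥ v) = (224631 : ℤ) • v := by
        have := congrArg (fun Mt => Mt *ᵥ v) hproj
        simp only [Matrix.add_mulVec, Matrix.smul_mulVec, Matrix.one_mulVec,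
          ← Matrix.mulVec_mulVec, hC, Matrix.mulVec_zero, add_zero] at this
        exact this
      refine ⟨Qm *ᵥ v, ?_⟩
      simp only [Matrix.mulVecLin_apply]
      have h1 : (224631 : ℤ) • (Bm *ᵥ (Qm *ᵥ v)) = (224631 : ℤ) • v := by
        rw [← Matrix.mulVec_smul, ← Matrix.mulVec_smul, ← key, Matrix.mulVec_mulVec,
          Matrix.mulVec_mulVec]
        rw [Matrix.mul_assoc, hQB, Matrix.mul_one]
      exact smul_cancel (by norm_num) h1
  · intro a b
    simp only [Matrix.mulVecLin_apply]
    rw [pair, hUB]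
end
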